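/- arXiv:2004.00751 — 2 statements merged into one kernel-verified Lean document; each statement's English description precedes it below -/
import Mathlib

section
/- Let D be a maximal Arrow's single-peaked domain on a set of size m ≥ 3 with terminal elements a₁ and a₂. Then for each i ∈ {1,2} and each j with 2 ≤ j ≤ m, exactly 2^(j−2) orders in D have aᵢ in position j, and exactly one order in D has aᵢ in position 1. -/
/-!
A terminal element `a` is never the never-bottom element of a triple containing it, so an order
ending with `a` cannot complete a Condorcet cycle on such a triple. By maximality, moving `a` to
the bottom of any order of `D` stays inside `D`; consequently the orders of `D` ending with `a`,
with `a` deleted, form a maximal Arrow's single-peaked domain on `A \ {a}`, and `D` has exactly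
two terminal elements. Splitting `D` by its last element gives `|D| = 2 ^ (|A| - 1)` by induction.
An order puts `a₁` in a position `j < |A|` exactly when it ends with `a₂` and its truncation puts
`a₁` in position `j`, while position `|A|` is held by the `2 ^ (|A| - 2)` orders ending with `a₁`.
-/

/-- A list `l` represents a linear order on the finite set `A`:
it is duplicate-free and its members are exactly the elements of `A`,
listed from most to least preferred. -/
def IsLinOrd {α : Type*} (A : Finset α) (l : List α) : Prop :=
  l.Nodup ∧ ∀ a : α, a ∈ l ↔ a ∈ A

/-- The restriction of the order `l` to the subset `S`. -/
def restrictList {α : Type*} [DecidableEq α] (l : List α) (S : Finset α) : List α :=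
  l.filter (fun a => a ∈ S)

/-- The domain contraction of `D` on `S`: the set of restrictions to `S`
of the orders in `D` (as a set, so duplicates are automatically removed). -/
def contraction {α : Type*} [DecidableEq α] (D : Set (List α)) (S : Finset α) :
    Set (List α) :=
  (fun l => restrictList l S) '' D

/-- `D` contains a Condorcet triple: elements `a, b, c` and orders
`v₁, v₂, v₃ ∈ D` restricting on `{a,b,c}` to `a≻b≻c`, `b≻c≻a`, `c≻a≻b`. -/
def CondorcetTriple {α : Type*} [DecidableEq α] (D : Set (List α)) : Prop :=
  ∃ a b c : α, a ≠ b ∧ a ≠ c ∧ b ≠ c ∧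
    ∃ v₁ ∈ D, ∃ v₂ ∈ D, ∃ v₃ ∈ D,
      restrictList v₁ {a, b, c} = [a, b, c] ∧
      restrictList v₂ {a, b, c} = [b, c, a] ∧
      restrictList v₃ {a, b, c} = [c, a, b]

/-- A Condorcet domain on `A`: a set of linear orders on `A` with no Condorcet triple. -/
def IsCondorcetDomain {α : Type*} [DecidableEq α] (A : Finset α) (D : Set (List α)) : Prop :=
  (∀ l ∈ D, IsLinOrd A l) ∧ ¬ CondorcetTriple D

/-- A maximal Condorcet domain on `A`: no strict superset is a Condorcet domain on `A`. -/
def IsMaxCondorcetDomain {α : Type*} [DecidableEq α] (A : Finset α) (D : Set (List α)) : Prop :=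
  IsCondorcetDomain A D ∧ ∀ D' : Set (List α), IsCondorcetDomain A D' → D ⊆ D' → D' = D

/-- `x` is a never-bottom element of the triple `T` for `D`:
no order of `D` ranks `x` below both other elements of `T`. -/
def NeverBottom {α : Type*} [DecidableEq α] (D : Set (List α)) (T : Finset α) (x : α) : Prop :=
  x ∈ T ∧ ∀ l ∈ D, (restrictList l T).getLast? ≠ some x

/-- An Arrow's single-peaked domain on `A`: a Condorcet domain such that every
3-element subset of `A` has a never-bottom element. -/
def IsArrowSP {α : Type*} [DecidableEq α] (A : Finset α) (D : Set (List α)) : Prop :=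
  IsCondorcetDomain A D ∧
    ∀ T : Finset α, T ⊆ A → T.card = 3 → ∃ x : α, NeverBottom D T x

/-- A maximal Arrow's single-peaked domain on `A`. -/
def IsMaxArrowSP {α : Type*} [DecidableEq α] (A : Finset α) (D : Set (List α)) : Prop :=
  IsMaxCondorcetDomain A D ∧ IsArrowSP A D

/-- `a` is a terminal element of `D`: some order of `D` ends with (least element) `a`. -/
def TerminalElt {α : Type*} (D : Set (List α)) (a : α) : Prop :=
  ∃ l ∈ D, l.getLast? = some a

/-- `l` is an extremal order of `D`: `l ∈ D`, and the first and last elements of `l`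
are the two terminal elements of `D`. -/
def IsExtremal {α : Type*} (D : Set (List α)) (l : List α) : Prop :=
  l ∈ D ∧ ∃ s t : α, s ≠ t ∧ l.head? = some s ∧ l.getLast? = some t ∧
    TerminalElt D s ∧ TerminalElt D t ∧ ∀ a : α, TerminalElt D a → a = s ∨ a = t

/-- The position of `a` in the order `l`, the first element being in position 1. -/
def posIn {α : Type*} [DecidableEq α] (l : List α) (a : α) : ℕ :=
  l.idxOf a + 1

section LinearOrders

variable {α : Type*} {A : Finset α} {l l' w : List α} {a : α}

theorem isLinOrd_iff_perm : IsLinOrd A l ↔ l.Perm A.toList :=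
  ⟨fun h => (List.perm_ext_iff_of_nodup h.1 A.nodup_toList).2 (by simpa using h.2),
    fun h => ⟨h.nodup_iff.2 A.nodup_toList, fun a => by simpa using h.mem_iff⟩⟩

theorem IsLinOrd.perm (h : IsLinOrd A l) (hp : l'.Perm l) : IsLinOrd A l' :=
  isLinOrd_iff_perm.2 (hp.trans (isLinOrd_iff_perm.1 h))

theorem IsLinOrd.length_eq (h : IsLinOrd A l) : l.length = A.card := by
  simpa using (isLinOrd_iff_perm.1 h).length_eq

theorem IsLinOrd.exists_eq_concat (h : IsLinOrd A l) (hA : A.Nonempty) :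
    ∃ w c, l = w ++ [c] :=
  (List.eq_nil_or_concat' l).resolve_left fun hl =>
    hA.card_pos.ne' (by simpa [hl] using h.length_eq.symm)

theorem finite_of_forall_isLinOrd {D : Set (List α)} (h : ∀ l ∈ D, IsLinOrd A l) : D.Finite :=
  A.toList.permutations.finite_toSet.subset fun l hl => by
    simpa [List.mem_permutations] using isLinOrd_iff_perm.1 (h l hl)

theorem isLinOrd_concat_iff [DecidableEq α] (ha : a ∈ A) :
    IsLinOrd A (w ++ [a]) ↔ IsLinOrd (A.erase a) w := by
  simp only [IsLinOrd, List.nodup_append, List.mem_append, List.mem_singleton, Finset.mem_erase]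
  grind

theorem TerminalElt.mem {D : Set (List α)} (hlin : ∀ l ∈ D, IsLinOrd A l)
    (ha : TerminalElt D a) : a ∈ A := by
  obtain ⟨l, hl, h⟩ := ha
  exact ((hlin l hl).2 a).1 (List.mem_of_getLast? h)

end LinearOrders

section Restriction

variable {α : Type*} [DecidableEq α] {T : Finset α} {l w : List α} {a : α}

@[simp]
theorem restrictList_append (l₁ l₂ : List α) (T : Finset α) :
    restrictList (l₁ ++ l₂) T = restrictList l₁ T ++ restrictList l₂ T :=
  List.filter_append _ _

theorem restrictList_singleton_of_notMem (h : a ∉ T) : restrictList [a] T = [] := by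
  simp [restrictList, h]

theorem restrictList_concat_of_notMem (h : a ∉ T) :
    restrictList (w ++ [a]) T = restrictList w T := by
  simp [restrictList_singleton_of_notMem h]

theorem getLast?_restrictList_concat (h : a ∈ T) :
    (restrictList (w ++ [a]) T).getLast? = some a := by
  simp [restrictList, h]

theorem restrictList_erase_of_notMem (hl : l.Nodup) (h : a ∉ T) :
    restrictList (l.erase a) T = restrictList l T := by
  rw [hl.erase_eq_filter, restrictList, restrictList, List.filter_filter]
  congr 1
  funext x
  by_cases hx : x = a <;> simp [hx, h]

theorem TerminalElt.exists_getLast?_restrictList {D : Set (List α)} (ha : TerminalElt D a)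
    (haT : a ∈ T) : ∃ l ∈ D, (restrictList l T).getLast? = some a := by
  obtain ⟨l, hl, h⟩ := ha
  obtain ⟨w, rfl⟩ := List.getLast?_eq_some_iff.1 h
  exact ⟨_, hl, getLast?_restrictList_concat haT⟩

end Restriction

section Cycles

variable {α : Type*} [DecidableEq α] {A : Finset α} {D E : Set (List α)} {l : List α}
  {a t x y z : α}

def CondorcetCycle (D : Set (List α)) (x y z : α) : Prop :=
  [x, y, z] ∈ contraction D {x, y, z} ∧ [y, z, x] ∈ contraction D {x, y, z} ∧
    [z, x, y] ∈ contraction D {x, y, z}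

theorem condorcetTriple_iff :
    CondorcetTriple D ↔ ∃ x y z, x ≠ y ∧ x ≠ z ∧ y ≠ z ∧ CondorcetCycle D x y z := by
  simp only [CondorcetTriple, CondorcetCycle, contraction, Set.mem_image]
  constructor
  · rintro ⟨x, y, z, hxy, hxz, hyz, v₁, h₁, v₂, h₂, v₃, h₃, e₁, e₂, e₃⟩
    exact ⟨x, y, z, hxy, hxz, hyz, ⟨v₁, h₁, e₁⟩, ⟨v₂, h₂, e₂⟩, ⟨v₃, h₃, e₃⟩⟩
  · rintro ⟨x, y, z, hxy, hxz, hyz, ⟨v₁, h₁, e₁⟩, ⟨v₂, h₂, e₂⟩, ⟨v₃, h₃, e₃⟩⟩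
    exact ⟨x, y, z, hxy, hxz, hyz, v₁, h₁, v₂, h₂, v₃, h₃, e₁, e₂, e₃⟩

theorem CondorcetCycle.mono (hc : CondorcetCycle D x y z)
    (h : contraction D {x, y, z} ⊆ contraction E {x, y, z}) : CondorcetCycle E x y z :=
  ⟨h hc.1, h hc.2.1, h hc.2.2⟩

theorem CondorcetCycle.of_insert (hc : CondorcetCycle (insert l D) x y z)
    (hl : restrictList l {x, y, z} ∈ contraction D {x, y, z}) : CondorcetCycle D x y z :=
  hc.mono (by rw [contraction, Set.image_insert_eq]; exact Set.insert_subset hl subset_rfl)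

theorem CondorcetCycle.subset (hc : CondorcetCycle D x y z) (hlin : ∀ l ∈ D, IsLinOrd A l) :
    ({x, y, z} : Finset α) ⊆ A := by
  obtain ⟨l, hl, e⟩ := hc.1
  intro t ht
  have htl : t ∈ restrictList l {x, y, z} := by simpa [e] using ht
  exact ((hlin l hl).2 t).1 (List.mem_of_mem_filter htl)

theorem CondorcetCycle.exists_getLast?_restrictList (hc : CondorcetCycle D x y z)
    (ht : t ∈ ({x, y, z} : Finset α)) :
    ∃ l ∈ D, (restrictList l {x, y, z}).getLast? = some t := by
  obtain ⟨⟨l₁, h₁, e₁⟩, ⟨l₂, h₂, e₂⟩, ⟨l₃, h₃, e₃⟩⟩ := hc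
  simp only [Finset.mem_insert, Finset.mem_singleton] at ht
  rcases ht with h | h | h <;> subst h
  exacts [⟨l₂, h₂, by simp [e₂]⟩, ⟨l₃, h₃, by simp [e₃]⟩, ⟨l₁, h₁, by simp [e₁]⟩]

theorem CondorcetCycle.not_forall_getLast?_restrictList_eq_or {p q : α}
    (hc : CondorcetCycle D x y z) (hxy : x ≠ y) (hxz : x ≠ z) (hyz : y ≠ z) :
    ¬ ∀ v ∈ D, (restrictList v {x, y, z}).getLast? = some p ∨
      (restrictList v {x, y, z}).getLast? = some q := by
  intro h
  have hbot : ∀ t ∈ ({x, y, z} : Finset α), t = p ∨ t = q := fun t ht => by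
    obtain ⟨v, hv, hvt⟩ := hc.exists_getLast?_restrictList ht
    simpa [hvt, eq_comm] using h v hv
  have hx := hbot x (by simp)
  have hy := hbot y (by simp)
  have hz := hbot z (by simp)
  grind

theorem IsMaxCondorcetDomain.mem_of_forall_not_condorcetCycle (hD : IsMaxCondorcetDomain A D)
    (hl : IsLinOrd A l)
    (h : ∀ x y z, x ≠ y → x ≠ z → y ≠ z → ({x, y, z} : Finset α) ⊆ A →
      ¬ CondorcetCycle (insert l D) x y z) : l ∈ D := by
  have hlin : ∀ v ∈ insert l D, IsLinOrd A v := by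
    rintro v (rfl | hv)
    exacts [hl, hD.1.1 v hv]
  have hcond : IsCondorcetDomain A (insert l D) := ⟨hlin, fun ht => by
    obtain ⟨x, y, z, hxy, hxz, hyz, hc⟩ := condorcetTriple_iff.1 ht
    exact h x y z hxy hxz hyz (hc.subset hlin) hc⟩
  rw [← hD.2 _ hcond (Set.subset_insert l D)]
  exact Set.mem_insert l D

/-- Every element of the cycle is a bottom element on the triple, so a never-bottom element
of `D` that is not the bottom of `l` rules out cycles in `insert l D`. -/
theorem IsArrowSP.not_condorcetCycle_insert (hD : IsArrowSP A D) (ha : TerminalElt D a)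
    (hxy : x ≠ y) (hxz : x ≠ z) (hyz : y ≠ z) (hT : ({x, y, z} : Finset α) ⊆ A)
    (haT : a ∈ ({x, y, z} : Finset α)) (hl : (restrictList l {x, y, z}).getLast? = some a) :
    ¬ CondorcetCycle (insert l D) x y z := by
  intro hc
  obtain ⟨t, htT, hnb⟩ := hD.2 _ hT (Finset.card_eq_three.2 ⟨x, y, z, hxy, hxz, hyz, rfl⟩)
  obtain ⟨la, hla, hlast⟩ := ha.exists_getLast?_restrictList haT
  have hta : t ≠ a := by
    rintro rfl
    exact hnb la hla hlast
  obtain ⟨v, hv, hvt⟩ := hc.exists_getLast?_restrictList htT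
  rcases hv with rfl | hv
  · exact hta (Option.some_injective _ (hvt.symm.trans hl))
  · exact hnb v hv hvt

end Cycles

section Terminals

variable {α : Type*} [DecidableEq α] {A : Finset α} {D : Set (List α)} {a b c : α}

theorem IsArrowSP.eq_or_eq_of_terminalElt (hD : IsArrowSP A D) (ha : TerminalElt D a)
    (hb : TerminalElt D b) (hab : a ≠ b) (hc : TerminalElt D c) : c = a ∨ c = b := by
  by_contra! h
  have hT : ({a, b, c} : Finset α) ⊆ A := by
    simp only [Finset.insert_subset_iff, Finset.singleton_subset_iff]
    exact ⟨ha.mem hD.1.1, hb.mem hD.1.1, hc.mem hD.1.1⟩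
  obtain ⟨t, htT, hnb⟩ :=
    hD.2 _ hT (Finset.card_eq_three.2 ⟨a, b, c, hab, h.1.symm, h.2.symm, rfl⟩)
  have ht : TerminalElt D t := by
    simp only [Finset.mem_insert, Finset.mem_singleton] at htT
    rcases htT with rfl | rfl | rfl <;> assumption
  obtain ⟨v, hv, hvt⟩ := ht.exists_getLast?_restrictList htT
  exact hnb v hv hvt

/-- If every order of `D` ended with `a`, swapping the last two entries of one of them would
create no Condorcet cycle: on triples containing `a` there would be only two bottom elements. -/
theorem IsMaxCondorcetDomain.exists_terminalElt_ne (hD : IsMaxCondorcetDomain A D)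
    (hA : 2 ≤ A.card) (ha : TerminalElt D a) : ∃ b, b ≠ a ∧ TerminalElt D b := by
  by_contra! hb
  have hA₀ : A.Nonempty := Finset.card_pos.1 (by omega)
  have hend : ∀ v ∈ D, ∃ w, v = w ++ [a] := by
    intro v hv
    obtain ⟨w, c, rfl⟩ := (hD.1.1 v hv).exists_eq_concat hA₀
    obtain rfl : c = a := by_contra fun hca => hb c hca ⟨_, hv, List.getLast?_concat⟩
    exact ⟨w, rfl⟩
  obtain ⟨l, hl, -⟩ := ha
  obtain ⟨w, rfl⟩ := hend l hl
  obtain ⟨l₀, b, rfl⟩ := (List.eq_nil_or_concat' w).resolve_left fun h => by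
    simpa [h] using (hD.1.1 _ hl).length_eq.trans_ge hA
  have hba : b ≠ a := by
    have := (hD.1.1 _ hl).1
    simp only [List.nodup_append, List.nodup_cons, List.mem_singleton] at this
    exact fun h => this.2.2 b (by simp) a rfl h
  have hswap : l₀ ++ [a] ++ [b] ∈ D := by
    refine hD.mem_of_forall_not_condorcetCycle
      ((hD.1.1 _ hl).perm (by simpa using (List.Perm.swap b a []).append_left l₀))
      fun x y z hxy hxz hyz _ hc => ?_
    by_cases haT : a ∈ ({x, y, z} : Finset α)
    · refine hc.not_forall_getLast?_restrictList_eq_or hxy hxz hyz (p := a) (q := b) ?_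
      rintro v (rfl | hv)
      · by_cases hbT : b ∈ ({x, y, z} : Finset α)
        · exact .inr (getLast?_restrictList_concat hbT)
        · rw [restrictList_concat_of_notMem hbT]
          exact .inl (getLast?_restrictList_concat haT)
      · obtain ⟨u, rfl⟩ := hend v hv
        exact .inl (getLast?_restrictList_concat haT)
    · exact hD.1.2 (condorcetTriple_iff.2 ⟨x, y, z, hxy, hxz, hyz, hc.of_insert
        ⟨_, hl, by simp only [restrictList_append, restrictList_singleton_of_notMem haT,
          List.append_nil]⟩⟩)
  obtain ⟨u, hu⟩ := hend _ hswap
  exact hba (List.singleton_inj.1 (List.append_inj_right' hu rfl))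

end Terminals

section DropBottom

variable {α : Type*} {A T : Finset α} {D : Set (List α)} {l w : List α} {a b t : α}

def dropBottom (D : Set (List α)) (a : α) : Set (List α) := (· ++ [a]) ⁻¹' D

variable [DecidableEq α]

theorem contraction_dropBottom_subset (haT : a ∉ T) :
    contraction (dropBottom D a) T ⊆ contraction D T := by
  rintro _ ⟨w, hw, rfl⟩
  exact ⟨_, hw, restrictList_concat_of_notMem haT⟩

theorem isArrowSP_dropBottom (hD : IsArrowSP A D) (ha : a ∈ A) :
    IsArrowSP (A.erase a) (dropBottom D a) := by
  have hlin : ∀ w ∈ dropBottom D a, IsLinOrd (A.erase a) w := fun w hw =>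
    (isLinOrd_concat_iff ha).1 (hD.1.1 _ hw)
  refine ⟨⟨hlin, fun ht => ?_⟩, fun T hT hcard => ?_⟩
  · obtain ⟨x, y, z, hxy, hxz, hyz, hc⟩ := condorcetTriple_iff.1 ht
    have haT : a ∉ ({x, y, z} : Finset α) := fun h => (Finset.mem_erase.1 (hc.subset hlin h)).1 rfl
    exact hD.1.2 (condorcetTriple_iff.2
      ⟨x, y, z, hxy, hxz, hyz, hc.mono (contraction_dropBottom_subset haT)⟩)
  · have haT : a ∉ T := fun h => (Finset.mem_erase.1 (hT h)).1 rfl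
    obtain ⟨x, hxT, hnb⟩ := hD.2 T (hT.trans (Finset.erase_subset _ _)) hcard
    exact ⟨x, hxT, fun w hw => by simpa only [restrictList_concat_of_notMem haT] using hnb _ hw⟩

theorem IsMaxArrowSP.concat_mem (hD : IsMaxArrowSP A D) (ha : TerminalElt D a)
    (hw : IsLinOrd A (w ++ [a]))
    (h : ∀ x y z, x ≠ y → x ≠ z → y ≠ z → a ∉ ({x, y, z} : Finset α) →
      ¬ CondorcetCycle (insert (w ++ [a]) D) x y z) : w ++ [a] ∈ D := by
  refine hD.1.mem_of_forall_not_condorcetCycle hw fun x y z hxy hxz hyz hT => ?_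
  by_cases haT : a ∈ ({x, y, z} : Finset α)
  · exact hD.2.not_condorcetCycle_insert ha hxy hxz hyz hT haT (getLast?_restrictList_concat haT)
  · exact h x y z hxy hxz hyz haT

theorem IsMaxArrowSP.erase_concat_mem (hD : IsMaxArrowSP A D) (ha : TerminalElt D a)
    (hl : l ∈ D) : l.erase a ++ [a] ∈ D := by
  have hlin := hD.1.1.1 l hl
  have hperm : (l.erase a ++ [a]).Perm l := (List.perm_append_singleton _ _).trans
    (List.perm_cons_erase ((hlin.2 a).2 (ha.mem hD.1.1.1))).symm
  refine hD.concat_mem ha (hlin.perm hperm) fun x y z hxy hxz hyz haT hc => ?_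
  refine hD.1.1.2 (condorcetTriple_iff.2 ⟨x, y, z, hxy, hxz, hyz, hc.of_insert ⟨l, hl, ?_⟩⟩)
  rw [restrictList_concat_of_notMem haT, restrictList_erase_of_notMem hlin.1 haT]

theorem IsMaxArrowSP.contraction_subset_dropBottom (hD : IsMaxArrowSP A D)
    (ha : TerminalElt D a) (haT : a ∉ T) : contraction D T ⊆ contraction (dropBottom D a) T := by
  rintro _ ⟨l, hl, rfl⟩
  exact ⟨l.erase a, hD.erase_concat_mem ha hl,
    restrictList_erase_of_notMem (hD.1.1.1 l hl).1 haT⟩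

theorem isMaxArrowSP_dropBottom (hD : IsMaxArrowSP A D) (ha : TerminalElt D a) :
    IsMaxArrowSP (A.erase a) (dropBottom D a) := by
  have hsp := isArrowSP_dropBottom hD.2 (ha.mem hD.1.1.1)
  refine ⟨⟨hsp.1, fun D' hD' hsub => Set.Subset.antisymm (fun w hw => ?_) hsub⟩, hsp⟩
  refine hD.concat_mem ha ((isLinOrd_concat_iff (ha.mem hD.1.1.1)).2 (hD'.1 w hw))
    fun x y z hxy hxz hyz haT hc => hD'.2 (condorcetTriple_iff.2 ⟨x, y, z, hxy, hxz, hyz, ?_⟩)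
  refine hc.mono ?_
  rw [contraction, Set.image_insert_eq]
  exact Set.insert_subset ⟨w, hw, (restrictList_concat_of_notMem haT).symm⟩
    ((hD.contraction_subset_dropBottom ha haT).trans (Set.image_mono hsub))

theorem IsMaxArrowSP.terminalElt_dropBottom (hD : IsMaxArrowSP A D) (ha : TerminalElt D a)
    (ht : TerminalElt D t) (hta : t ≠ a) : TerminalElt (dropBottom D a) t := by
  obtain ⟨l, hl, hlast⟩ := ht
  obtain ⟨w, rfl⟩ := List.getLast?_eq_some_iff.1 hlast
  have haw : a ∈ w := by
    simpa [Ne.symm hta] using ((hD.1.1.1 _ hl).2 a).2 (ha.mem hD.1.1.1)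
  refine ⟨w.erase a ++ [t], ?_, List.getLast?_concat⟩
  simpa [dropBottom, List.erase_append_left _ haw] using hD.erase_concat_mem ha hl

theorem IsMaxArrowSP.exists_terminalElt_ne (hD : IsMaxArrowSP A D) (hA : 2 ≤ A.card)
    (ha : TerminalElt D a) :
    ∃ b, b ≠ a ∧ TerminalElt D b ∧ ∀ l ∈ D, l.getLast? = some a ∨ l.getLast? = some b := by
  obtain ⟨b, hba, hb⟩ := hD.1.exists_terminalElt_ne hA ha
  refine ⟨b, hba, hb, fun l hl => ?_⟩
  obtain ⟨w, c, rfl⟩ := (hD.1.1.1 l hl).exists_eq_concat (Finset.card_pos.1 (by omega))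
  rcases hD.2.eq_or_eq_of_terminalElt ha hb hba.symm ⟨_, hl, List.getLast?_concat⟩ with rfl | rfl
  · exact .inl List.getLast?_concat
  · exact .inr List.getLast?_concat

end DropBottom

section Counting

variable {α : Type*} {A : Finset α} {S D : Set (List α)} {w : List α} {a b : α}

theorem ncard_eq_ncard_dropBottom_add (hS : S.Finite) (hab : a ≠ b)
    (hend : ∀ l ∈ S, l.getLast? = some a ∨ l.getLast? = some b) :
    S.ncard = (dropBottom S a).ncard + (dropBottom S b).ncard := by
  have hcard (c : α) : (dropBottom S c).ncard = (S ∩ {l | l.getLast? = some c}).ncard := by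
    have hrange : Set.range (· ++ [c]) = {l : List α | l.getLast? = some c} := by
      ext l
      simp [List.getLast?_eq_some_iff, eq_comm]
    rw [← hrange, ← Set.image_preimage_eq_inter_range,
      Set.ncard_image_of_injective _ (List.append_left_injective [c]), dropBottom]
  rw [hcard, hcard, ← Set.ncard_inter_add_ncard_sdiff_eq_ncard S {l | l.getLast? = some a} hS]
  congr 2
  ext l
  simp only [Set.mem_sdiff, Set.mem_inter_iff, Set.mem_ofPred_eq]
  have := hend l
  grind

theorem eq_singleton_of_card_eq_one (hlin : ∀ l ∈ D, IsLinOrd A l) (hA : A.card = 1)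
    (ha : TerminalElt D a) : D = {[a]} := by
  obtain ⟨c, rfl⟩ := Finset.card_eq_one.1 hA
  obtain rfl : a = c := Finset.mem_singleton.1 (ha.mem hlin)
  have hsingle : ∀ l ∈ D, l = [a] := fun l hl => by
    simpa using isLinOrd_iff_perm.1 (hlin l hl)
  obtain ⟨l, hl, -⟩ := ha
  exact Set.eq_singleton_iff_unique_mem.2 ⟨hsingle l hl ▸ hl, hsingle⟩

variable [DecidableEq α]

theorem IsMaxArrowSP.ncard_eq (hD : IsMaxArrowSP A D) (ha : TerminalElt D a) :
    D.ncard = 2 ^ (A.card - 1) := by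
  obtain ⟨n, hn⟩ : ∃ n, A.card = n + 1 :=
    Nat.exists_eq_add_one.2 (Finset.card_pos.2 ⟨a, ha.mem hD.1.1.1⟩)
  induction n generalizing A D a with
  | zero => simp [eq_singleton_of_card_eq_one hD.1.1.1 hn ha, hn]
  | succ n ih =>
    obtain ⟨b, hba, hb, hend⟩ := hD.exists_terminalElt_ne (by omega) ha
    have hcard (c : α) (hc : TerminalElt D c) : (A.erase c).card = n + 1 := by
      rw [Finset.card_erase_of_mem (hc.mem hD.1.1.1), hn]
      rfl
    rw [ncard_eq_ncard_dropBottom_add (finite_of_forall_isLinOrd hD.1.1.1) hba.symm hend,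
      ih (isMaxArrowSP_dropBottom hD ha) (hD.terminalElt_dropBottom ha hb hba) (hcard a ha),
      ih (isMaxArrowSP_dropBottom hD hb) (hD.terminalElt_dropBottom hb ha hba.symm) (hcard b hb),
      hcard a ha, hcard b hb, hn]
    simp only [Nat.add_sub_cancel]
    ring

theorem posIn_append_of_mem (s : List α) (h : a ∈ w) : posIn (w ++ s) a = posIn w a := by
  simp [posIn, List.idxOf_append_of_mem h]

theorem IsLinOrd.posIn_concat (hw : IsLinOrd A (w ++ [a])) : posIn (w ++ [a]) a = A.card := by
  have haw : a ∉ w := fun h => (List.nodup_append.1 hw.1).2.2 a h a (by simp) rfl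
  simp [posIn, List.idxOf_append_of_notMem haw, ← hw.length_eq]

theorem IsLinOrd.posIn_concat_lt (hw : IsLinOrd A (w ++ [b])) (ha : a ∈ A) (hab : a ≠ b) :
    posIn (w ++ [b]) a < A.card := by
  have haw : a ∈ w := by simpa [hab] using (hw.2 a).2 ha
  rw [posIn_append_of_mem _ haw, ← hw.length_eq, List.length_append]
  have := List.idxOf_lt_length_iff.2 haw
  simp only [posIn, List.length_singleton]
  omega

theorem ncard_posIn_eq_of_lt (hlin : ∀ l ∈ D, IsLinOrd A l) (ha : a ∈ A) (hab : a ≠ b)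
    (hend : ∀ l ∈ D, l.getLast? = some a ∨ l.getLast? = some b) {j : ℕ} (hj : j < A.card) :
    {l ∈ D | posIn l a = j}.ncard = {w ∈ dropBottom D b | posIn w a = j}.ncard := by
  rw [ncard_eq_ncard_dropBottom_add ((finite_of_forall_isLinOrd hlin).subset
    (Set.sep_subset _ _)) hab fun l hl => hend l hl.1]
  have hDa : dropBottom {l ∈ D | posIn l a = j} a = ∅ :=
    Set.eq_empty_of_forall_notMem fun w ⟨hw, hpos⟩ => hj.ne (hpos ▸ (hlin _ hw).posIn_concat)
  have hDb : dropBottom {l ∈ D | posIn l a = j} b = {w ∈ dropBottom D b | posIn w a = j} := by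
    ext w
    refine and_congr_right fun hw => ?_
    have haw : a ∈ w := by simpa [hab] using ((hlin _ hw).2 a).2 ha
    exact iff_of_eq (congrArg (· = j) (posIn_append_of_mem _ haw))
  rw [hDa, hDb, Set.ncard_empty, zero_add]

theorem ncard_posIn_eq_card (hlin : ∀ l ∈ D, IsLinOrd A l) (ha : a ∈ A) (hab : a ≠ b)
    (hend : ∀ l ∈ D, l.getLast? = some a ∨ l.getLast? = some b) :
    {l ∈ D | posIn l a = A.card}.ncard = (dropBottom D a).ncard := by
  rw [ncard_eq_ncard_dropBottom_add ((finite_of_forall_isLinOrd hlin).subset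
    (Set.sep_subset _ _)) hab fun l hl => hend l hl.1]
  have hDa : dropBottom {l ∈ D | posIn l a = A.card} a = dropBottom D a := by
    ext w
    exact and_iff_left_of_imp fun hw => (hlin _ hw).posIn_concat
  have hDb : dropBottom {l ∈ D | posIn l a = A.card} b = ∅ :=
    Set.eq_empty_of_forall_notMem fun w ⟨hw, hpos⟩ => ((hlin _ hw).posIn_concat_lt ha hab).ne hpos
  rw [hDa, hDb, Set.ncard_empty, add_zero]

/-- For `j = 1` the exponent `j - 2` truncates to `0`: exactly one order puts `a` on top. -/
theorem IsMaxArrowSP.ncard_posIn_eq (hD : IsMaxArrowSP A D) (ha : TerminalElt D a) {j : ℕ}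
    (hj : 1 ≤ j) (hjA : j ≤ A.card) : {l ∈ D | posIn l a = j}.ncard = 2 ^ (j - 2) := by
  obtain ⟨n, hn⟩ : ∃ n, A.card = n + 1 := Nat.exists_eq_add_one.2 (by omega)
  induction n generalizing A D a j with
  | zero =>
    obtain rfl : j = 1 := by omega
    rw [eq_singleton_of_card_eq_one hD.1.1.1 hn ha,
      Set.sep_eq_self_iff_mem_true.2 (by simp [posIn]), Set.ncard_singleton]
    rfl
  | succ n ih =>
    obtain ⟨b, hba, hb, hend⟩ := hD.exists_terminalElt_ne (by omega) ha
    have haA := ha.mem hD.1.1.1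
    have hcard (c : α) (hc : TerminalElt D c) : (A.erase c).card = n + 1 := by
      rw [Finset.card_erase_of_mem (hc.mem hD.1.1.1), hn]
      rfl
    rcases hjA.lt_or_eq with hjA | rfl
    · rw [ncard_posIn_eq_of_lt hD.1.1.1 haA hba.symm hend hjA,
        ih (isMaxArrowSP_dropBottom hD hb) (hD.terminalElt_dropBottom hb ha hba.symm) hj
          (by rw [hcard b hb]; omega) (hcard b hb)]
    · rw [ncard_posIn_eq_card hD.1.1.1 haA hba.symm hend,
        (isMaxArrowSP_dropBottom hD ha).ncard_eq (hD.terminalElt_dropBottom ha hb hba),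
        hcard a ha, hn]
      rfl

end Counting

theorem stmt_5_general {α : Type*} [DecidableEq α] (A : Finset α) (m : ℕ) (hm : A.card = m)
    (D : Set (List α)) (hD : IsMaxArrowSP A D) (a₁ a₂ : α)
    (ht1 : TerminalElt D a₁) (ht2 : TerminalElt D a₂) :
    ∀ i ∈ ({a₁, a₂} : Set α),
      (∀ j : ℕ, 2 ≤ j → j ≤ m → {l ∈ D | posIn l i = j}.ncard = 2 ^ (j - 2)) ∧
      {l ∈ D | posIn l i = 1}.ncard = 1 := by
  intro i hi
  have hti : TerminalElt D i := by
    rcases hi with rfl | rfl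
    exacts [ht1, ht2]
  subst hm
  exact ⟨fun j hj hjA => hD.ncard_posIn_eq hti (by omega) hjA,
    hD.ncard_posIn_eq hti le_rfl (Finset.card_pos.2 ⟨i, hti.mem hD.1.1.1⟩)⟩

/-- In a maximal Arrow's single-peaked domain on a set of size `m ≥ 3` with terminal
elements `a₁, a₂`, exactly `2^(j-2)` orders have `aᵢ` in position `j` (for `2 ≤ j ≤ m`)
and exactly one order has `aᵢ` in position 1. -/
theorem stmt_5 {α : Type*} [DecidableEq α] (A : Finset α) (m : ℕ) (hm : A.card = m)
    (hm3 : 3 ≤ m) (D : Set (List α)) (hD : IsMaxArrowSP A D) (a₁ a₂ : α) (h12 : a₁ ≠ a₂)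
    (ht1 : TerminalElt D a₁) (ht2 : TerminalElt D a₂)
    (hall : ∀ a : α, TerminalElt D a → a = a₁ ∨ a = a₂) :
    ∀ i ∈ ({a₁, a₂} : Set α),
      (∀ j : ℕ, 2 ≤ j → j ≤ m → {l ∈ D | posIn l i = j}.ncard = 2 ^ (j - 2)) ∧
      {l ∈ D | posIn l i = 1}.ncard = 1 :=
  stmt_5_general A m hm D hD a₁ a₂ ht1 ht2
end

section
/- Let D be a maximal Arrow's single-peaked domain on a set A with extremal orders P and θ(P), where θ is the inherited permutation of D. If there exist distinct elements x, x', a ∈ A with θ(x) = x', θ(a) = a, and such that the restriction of P to {x, x', a} is x ≻ x' ≻ a, then D is not self-paired. -/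
/-!
If `θ` maps `D` onto itself, it permutes the extremal orders, hence swaps `P` and `Q` and is an
involution; so it preserves `T = {x, x', a}` and permutes the never-bottom elements of `T`.
Since `P` ranks `a` last on `T`, one of `x, x'` is never-bottom, hence both are.

But in a maximal Arrow's single-peaked domain a triple `T` has only one never-bottom element.
If `w₁ ≠ w₂` were two, with `a` the third element, build an order from the bottom up, always
choosing among the remaining elements one other than `a` that some order of `D` ranks last there,
or, if every order of `D` ranks `a` last there, the one ranked last among the others by a fixed
order of `D`. Each triple then gets a bottom already realised in `D` or has two never-bottom
elements, so the new order creates no Condorcet triple; by maximality it lies in `D`, yet it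
ranks `w₁` or `w₂` last on `T`.
-/
section CondorcetDomain

variable {α : Type*} [DecidableEq α]

lemma restrictList_restrictList (l : List α) {T R : Finset α} (hTR : T ⊆ R) :
    restrictList (restrictList l R) T = restrictList l T := by
  simp only [restrictList, List.filter_filter]
  refine List.filter_congr fun c _ => ?_
  by_cases hc : c ∈ T
  · simp [hc, hTR hc]
  · simp [hc]

lemma getLast?_restrictList_of_subset {l : List α} {T R : Finset α} {b : α}
    (h : (restrictList l R).getLast? = some b) (hTR : T ⊆ R) (hb : b ∈ T) :
    (restrictList l T).getLast? = some b := by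
  obtain ⟨ys, hys⟩ := List.getLast?_eq_some_iff.1 h
  rw [← restrictList_restrictList l hTR, hys]
  simp [restrictList, List.filter_append, hb]

lemma mem_of_getLast?_restrictList {l : List α} {R : Finset α} {b : α}
    (h : (restrictList l R).getLast? = some b) : b ∈ R := by
  simpa [restrictList] using (List.mem_filter.1 (List.mem_of_getLast? h)).2

lemma exists_getLast?_restrictList {A R : Finset α} {l : List α} (hl : IsLinOrd A l)
    (hRA : R ⊆ A) {c : α} (hc : c ∈ R) : ∃ b, (restrictList l R).getLast? = some b := by
  have hcl : c ∈ restrictList l R := List.mem_filter.2 ⟨(hl.2 c).2 (hRA hc), by simpa using hc⟩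
  exact ⟨_, List.getLast?_eq_getLast_of_ne_nil (List.ne_nil_of_mem hcl)⟩

lemma getLast?_restrictList_append_of_mem (l : List α) {T : Finset α} {b : α} (hb : b ∈ T) :
    (restrictList (l ++ [b]) T).getLast? = some b := by
  simp [restrictList, List.filter_append, hb]

lemma restrictList_append_of_notMem (l : List α) {T : Finset α} {b : α} (hb : b ∉ T) :
    restrictList (l ++ [b]) T = restrictList l T := by
  simp [restrictList, List.filter_append, hb]

lemma restrictList_map (l : List α) (θ : Equiv.Perm α) {T : Finset α}
    (hT : ∀ b, θ b ∈ T ↔ b ∈ T) :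
    restrictList (l.map θ) T = (restrictList l T).map θ := by
  simp only [restrictList, List.filter_map]
  congr 1
  exact List.filter_congr fun c _ => by simp [hT c]

lemma IsLinOrd.append_singleton {R : Finset α} {u : List α} {b : α}
    (hu : IsLinOrd (R.erase b) u) (hb : b ∈ R) : IsLinOrd R (u ++ [b]) := by
  refine ⟨List.nodup_append.2 ⟨hu.1, List.nodup_singleton b, ?_⟩, fun c => ?_⟩
  · rintro c hc _ hcb rfl
    exact (Finset.mem_erase.1 ((hu.2 c).1 hc)).1 (List.mem_singleton.1 hcb)
  · rw [List.mem_append, hu.2, List.mem_singleton, Finset.mem_erase]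
    by_cases hcb : c = b
    · simp [hcb, hb]
    · simp [hcb]

lemma not_condorcetTriple_singleton (v : List α) : ¬ CondorcetTriple ({v} : Set (List α)) := by
  rintro ⟨a, b, c, hab, -, -, v₁, rfl, v₂, rfl, -, -, h₁, h₂, -⟩
  exact hab (List.cons.inj (h₁.symm.trans h₂)).1

lemma CondorcetTriple.exists_bottoms {D : Set (List α)} (h : CondorcetTriple D) :
    ∃ T : Finset α, T.card = 3 ∧ ∀ t ∈ T, ∃ u ∈ D, (restrictList u T).getLast? = some t := by
  obtain ⟨a, b, c, hab, hac, hbc, v₁, hv₁, v₂, hv₂, v₃, hv₃, h₁, h₂, h₃⟩ := h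
  refine ⟨{a, b, c}, Finset.card_eq_three.2 ⟨a, b, c, hab, hac, hbc, rfl⟩, fun t ht => ?_⟩
  simp only [Finset.mem_insert, Finset.mem_singleton] at ht
  rcases ht with rfl | rfl | rfl
  · exact ⟨v₂, hv₂, by rw [h₂]; rfl⟩
  · exact ⟨v₃, hv₃, by rw [h₃]; rfl⟩
  · exact ⟨v₁, hv₁, by rw [h₁]; rfl⟩

/-- Putting `b` at the bottom of `T` in a new order cannot complete a Condorcet triple. -/
def SafeBottom (D : Set (List α)) (T : Finset α) (b : α) : Prop :=
  (∃ l ∈ D, (restrictList l T).getLast? = some b) ∨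
    ∃ w₁ w₂, w₁ ≠ w₂ ∧ NeverBottom D T w₁ ∧ NeverBottom D T w₂

lemma IsArrowSP.isCondorcetDomain_insert {A : Finset α} {D : Set (List α)} {v : List α}
    (hD : IsArrowSP A D) (hv : IsLinOrd A v)
    (hsafe : ∀ T ⊆ A, T.card = 3 → ∀ b, (restrictList v T).getLast? = some b →
      SafeBottom D T b) :
    IsCondorcetDomain A (insert v D) := by
  obtain ⟨⟨hlin, -⟩, hnb⟩ := hD
  have hlin' : ∀ l ∈ insert v D, IsLinOrd A l := by
    rintro l (rfl | hl)
    exacts [hv, hlin l hl]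
  refine ⟨hlin', fun hC => ?_⟩
  obtain ⟨T, hT, hbot⟩ := hC.exists_bottoms
  have hTA : T ⊆ A := fun t ht => by
    obtain ⟨u, hu, htu⟩ := hbot t ht
    exact ((hlin' u hu).2 t).1 (List.mem_filter.1 (List.mem_of_getLast? htu)).1
  obtain ⟨w, hwT, hw⟩ := hnb T hTA hT
  -- the never-bottom element `w` is the bottom of some order, which can only be `v`
  have hvw : (restrictList v T).getLast? = some w := by
    obtain ⟨u, hu | hu, hwu⟩ := hbot w hwT
    exacts [hu ▸ hwu, absurd hwu (hw u hu)]
  have huniq : ∀ t, NeverBottom D T t → t = w := by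
    rintro t ⟨htT, ht⟩
    obtain ⟨u, hu | hu, htu⟩ := hbot t htT
    exacts [Option.some_injective _ ((hu ▸ htu).symm.trans hvw), absurd htu (ht u hu)]
  rcases hsafe T hTA hT w hvw with ⟨l, hl, hlw⟩ | ⟨w₁, w₂, hne, h₁, h₂⟩
  · exact hw l hl hlw
  · exact hne ((huniq w₁ h₁).trans (huniq w₂ h₂).symm)

lemma exists_safeBottom_avoiding {A R : Finset α} {D : Set (List α)} {P : List α} (hP : P ∈ D)
    (hlin : ∀ l ∈ D, IsLinOrd A l) (hRA : R ⊆ A) {a : α} (hR : (R.erase a).Nonempty) :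
    ∃ β ∈ R, β ≠ a ∧ ∀ T ⊆ R, T.card = 3 → β ∈ T → SafeBottom D T β := by
  by_cases hbot : ∃ l ∈ D, ∃ β, (restrictList l R).getLast? = some β ∧ β ≠ a
  · obtain ⟨l, hl, β, hlβ, hβa⟩ := hbot
    exact ⟨β, mem_of_getLast?_restrictList hlβ, hβa, fun T hTR _ hβT =>
      Or.inl ⟨l, hl, getLast?_restrictList_of_subset hlβ hTR hβT⟩⟩
  push Not at hbot
  -- every order of `D` ranks `a` last on `R`; take `β` last in `P` among the others
  obtain ⟨c, hc⟩ := hR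
  obtain ⟨β, hPβ⟩ := exists_getLast?_restrictList (hlin P hP) ((R.erase_subset a).trans hRA) hc
  have hβ := mem_of_getLast?_restrictList hPβ
  refine ⟨β, Finset.mem_of_mem_erase hβ, Finset.ne_of_mem_erase hβ, fun T hTR hT hβT => ?_⟩
  by_cases haT : a ∈ T
  · have hnb : ∀ w ∈ T.erase a, NeverBottom D T w := fun w hw => by
      refine ⟨Finset.mem_of_mem_erase hw, fun l hl hlw => Finset.ne_of_mem_erase hw ?_⟩
      obtain ⟨γ, hlγ⟩ := exists_getLast?_restrictList (hlin l hl) hRA (Finset.mem_of_mem_erase hc)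
      obtain rfl := hbot l hl γ hlγ
      exact Option.some_injective _ (hlw.symm.trans (getLast?_restrictList_of_subset hlγ hTR haT))
    obtain ⟨w₁, w₂, hne, hTa⟩ := Finset.card_eq_two.1
      (by rw [Finset.card_erase_of_mem haT, hT] : (T.erase a).card = 2)
    exact Or.inr ⟨w₁, w₂, hne, hnb w₁ (by simp [hTa]), hnb w₂ (by simp [hTa])⟩
  · refine Or.inl ⟨P, hP, getLast?_restrictList_of_subset hPβ ?_ hβT⟩
    exact fun t ht => Finset.mem_erase.2 ⟨fun h => haT (h ▸ ht), hTR ht⟩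

lemma exists_isLinOrd_safeBottom {A : Finset α} {D : Set (List α)} {P : List α} (hP : P ∈ D)
    (hlin : ∀ l ∈ D, IsLinOrd A l) (a : α) (R : Finset α) (hRA : R ⊆ A) :
    ∃ v, IsLinOrd R v ∧ ∀ T ⊆ R, T.card = 3 → ∀ b, (restrictList v T).getLast? = some b →
      SafeBottom D T b ∧ b ≠ a := by
  induction R using Finset.strongInduction with
  | H R ih =>
  rcases (R.erase a).eq_empty_or_nonempty with hR | hR
  · refine ⟨R.toList, ⟨R.nodup_toList, fun _ => R.mem_toList⟩, fun T hTR hT => ?_⟩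
    have := Finset.card_le_card hTR
    have := Finset.pred_card_le_card_erase (s := R) (a := a)
    rw [hR, Finset.card_empty] at this
    omega
  obtain ⟨β, hβR, hβa, hβ⟩ := exists_safeBottom_avoiding hP hlin hRA hR
  obtain ⟨u, hu, hsafe⟩ :=
    ih (R.erase β) (Finset.erase_ssubset hβR) ((R.erase_subset β).trans hRA)
  refine ⟨u ++ [β], hu.append_singleton hβR, fun T hTR hT b hb => ?_⟩
  by_cases hβT : β ∈ T
  · obtain rfl := Option.some_injective _
      ((getLast?_restrictList_append_of_mem u hβT).symm.trans hb)
    exact ⟨hβ T hTR hT hβT, hβa⟩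
  · rw [restrictList_append_of_notMem u hβT] at hb
    exact hsafe T (fun t ht => Finset.mem_erase.2 ⟨fun h => hβT (h ▸ ht), hTR ht⟩) hT b hb

theorem IsMaxCondorcetDomain.nonempty {A : Finset α} {D : Set (List α)}
    (hD : IsMaxCondorcetDomain A D) : D.Nonempty := by
  rw [Set.nonempty_iff_ne_empty]
  rintro rfl
  have hsingle : IsCondorcetDomain A {A.toList} := by
    refine ⟨fun l hl => ?_, not_condorcetTriple_singleton _⟩
    rw [Set.mem_singleton_iff.1 hl]
    exact ⟨A.nodup_toList, fun _ => A.mem_toList⟩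
  exact Set.singleton_ne_empty _ (hD.2 _ hsingle (Set.empty_subset _))

theorem IsMaxArrowSP.eq_of_neverBottom {A T : Finset α} {D : Set (List α)}
    (hD : IsMaxArrowSP A D) (hTA : T ⊆ A) (hT : T.card = 3) {w₁ w₂ : α}
    (h₁ : NeverBottom D T w₁) (h₂ : NeverBottom D T w₂) : w₁ = w₂ := by
  by_contra hne
  obtain ⟨a, haT, ha⟩ : ∃ a ∈ T, a ∉ ({w₁, w₂} : Finset α) :=
    Finset.exists_mem_notMem_of_card_lt_card (Finset.card_le_two.trans_lt (by omega))
  simp only [Finset.mem_insert, Finset.mem_singleton, not_or] at ha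
  have hTeq : {w₁, w₂, a} = T := Finset.eq_of_subset_of_card_le
    (by simp [Finset.insert_subset_iff, h₁.1, h₂.1, haT])
    (by rw [hT, Finset.card_eq_three.2 ⟨w₁, w₂, a, hne, Ne.symm ha.1, Ne.symm ha.2, rfl⟩])
  obtain ⟨P, hP⟩ := hD.1.nonempty
  obtain ⟨v, hv, hsafe⟩ := exists_isLinOrd_safeBottom hP hD.1.1.1 a A subset_rfl
  have hvD : v ∈ D := by
    rw [← hD.1.2 _ (hD.2.isCondorcetDomain_insert hv fun T hTA hT b hb =>
      (hsafe T hTA hT b hb).1) (Set.subset_insert v D)]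
    exact Set.mem_insert v D
  obtain ⟨b, hb⟩ := exists_getLast?_restrictList hv hTA haT
  have hbT := mem_of_getLast?_restrictList hb
  rw [← hTeq] at hbT
  simp only [Finset.mem_insert, Finset.mem_singleton] at hbT
  rcases hbT with rfl | rfl | rfl
  · exact h₁.2 v hvD hb
  · exact h₂.2 v hvD hb
  · exact (hsafe T hTA hT b hb).2 rfl

end CondorcetDomain

section Relabelling

variable {α : Type*} {D : Set (List α)} {θ : Equiv.Perm α}

lemma terminalElt_apply_iff (hθD : (fun l : List α => l.map θ) '' D = D) {c : α} :
    TerminalElt D (θ c) ↔ TerminalElt D c := by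
  constructor
  · rintro ⟨l, hl, hlc⟩
    rw [← hθD] at hl
    obtain ⟨l₀, hl₀, rfl⟩ := hl
    rw [List.getLast?_map] at hlc
    obtain ⟨d, hd, hdc⟩ := Option.map_eq_some_iff.1 hlc
    exact ⟨l₀, hl₀, θ.injective hdc ▸ hd⟩
  · rintro ⟨l, hl, hlc⟩
    exact ⟨l.map θ, hθD ▸ ⟨l, hl, rfl⟩, by rw [List.getLast?_map, hlc]; rfl⟩

lemma IsExtremal.map_perm (hθD : (fun l : List α => l.map θ) '' D = D) {l : List α}
    (h : IsExtremal D l) : IsExtremal D (l.map θ) := by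
  obtain ⟨hl, s, t, hst, hs, ht, hsD, htD, hterm⟩ := h
  refine ⟨hθD ▸ ⟨l, hl, rfl⟩, θ s, θ t, θ.injective.ne hst, by rw [List.head?_map, hs]; rfl,
    by rw [List.getLast?_map, ht]; rfl, (terminalElt_apply_iff hθD).2 hsD,
    (terminalElt_apply_iff hθD).2 htD, fun c hc => ?_⟩
  rw [← θ.apply_symm_apply c, terminalElt_apply_iff hθD] at hc
  rcases hterm _ hc with h | h
  exacts [Or.inl (by rw [← h, θ.apply_symm_apply]), Or.inr (by rw [← h, θ.apply_symm_apply])]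

lemma NeverBottom.apply [DecidableEq α] (hθD : (fun l : List α => l.map θ) '' D = D)
    {T : Finset α} (hT : ∀ b, θ b ∈ T ↔ b ∈ T) {w : α} (h : NeverBottom D T w) :
    NeverBottom D T (θ w) := by
  refine ⟨(hT w).2 h.1, fun l hl hlw => ?_⟩
  rw [← hθD] at hl
  obtain ⟨l₀, hl₀, rfl⟩ := hl
  rw [restrictList_map l₀ θ hT, List.getLast?_map] at hlw
  obtain ⟨d, hd, hdw⟩ := Option.map_eq_some_iff.1 hlw
  exact h.2 l₀ hl₀ (θ.injective hdw ▸ hd)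

-- `θ(Q)` is extremal; it cannot be `Q`, since then `θ` would fix everything
lemma apply_apply_eq_self_of_image_eq [DecidableEq α] {A : Finset α} {P Q : List α}
    (hlin : ∀ l ∈ D, IsLinOrd A l) (hP : P ∈ D) (hPQ : P ≠ Q) (eQ : IsExtremal D Q)
    (hu : ∀ l, IsExtremal D l → l = P ∨ l = Q) (hθ : P.map θ = Q)
    (hθD : (fun l : List α => l.map θ) '' D = D) : ∀ b ∈ A, θ (θ b) = b := by
  have hQθ := hu _ (eQ.map_perm hθD)
  rw [← hθ, List.map_map] at hQθ
  rcases hQθ with h | h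
  · exact fun b hb => List.map_inj_left.1 (h.trans P.map_id.symm) b (((hlin P hP).2 b).2 hb)
  · refine absurd ?_ hPQ
    rw [← hθ]
    conv_lhs => rw [← P.map_id]
    exact List.map_inj_left.2 fun b hb => (θ.injective (List.map_inj_left.1 h b hb)).symm

end Relabelling

/-- If `D` is a maximal Arrow's single-peaked domain with extremal orders `P` and
`θ(P)` (`θ` the inherited permutation), and there are distinct `x, x', a` with
`θ(x) = x'`, `θ(a) = a` and the restriction of `P` to `{x, x', a}` equal to
`x ≻ x' ≻ a`, then `D` is not self-paired. -/
theorem stmt_14 {α : Type*} [Fintype α] [DecidableEq α] (D : Set (List α))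
    (hD : IsMaxArrowSP (Finset.univ : Finset α) D) (P Q : List α) (hPQ : P ≠ Q)
    (eP : IsExtremal D P) (eQ : IsExtremal D Q)
    (hu : ∀ l : List α, IsExtremal D l → l = P ∨ l = Q)
    (θ : Equiv.Perm α) (hθ : P.map θ = Q)
    (x x' a : α) (hxx' : x ≠ x') (hxa : x ≠ a) (hx'a : x' ≠ a)
    (h1 : θ x = x') (h2 : θ a = a)
    (h3 : restrictList P {x, x', a} = [x, x', a]) :
    (fun l : List α => l.map θ) '' D ≠ D := by
  intro hθD
  have hθθ : ∀ b, θ (θ b) = b := fun b =>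
    apply_apply_eq_self_of_image_eq hD.1.1.1 eP.1 hPQ eQ hu hθ hθD b (Finset.mem_univ b)
  set T : Finset α := {x, x', a} with hT
  have hθx' : θ x' = x := by rw [← h1, hθθ]
  have hmapsTo : ∀ b ∈ T, θ b ∈ T := by
    simp only [hT, Finset.mem_insert, Finset.mem_singleton]
    rintro b (rfl | rfl | rfl) <;> simp [h1, hθx', h2]
  have hTθ : ∀ b, θ b ∈ T ↔ b ∈ T := fun b => ⟨fun h => hθθ b ▸ hmapsTo _ h, hmapsTo b⟩
  have hTcard : T.card = 3 := Finset.card_eq_three.2 ⟨x, x', a, hxx', hxa, hx'a, rfl⟩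
  obtain ⟨w, hw⟩ := hD.2.2 T (Finset.subset_univ T) hTcard
  have hwθ := hD.eq_of_neverBottom (Finset.subset_univ T) hTcard hw (hw.apply hθD hTθ)
  have hwT : w = x ∨ w = x' ∨ w = a := by simpa [hT] using hw.1
  rcases hwT with rfl | rfl | rfl
  · exact hxx' (hwθ.trans h1)
  · exact hxx' (hwθ.trans hθx').symm
  · exact hw.2 P eP.1 (by rw [h3]; rfl)
end
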